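/- arXiv:1810.08219 — 4 statements merged into one kernel-verified Lean document; each statement's English description precedes it below -/
import Mathlib

section
/- Let (ι, 𝒜) be a measurable space, let G : ι → (ℝ → ℝ) be such that (i, x) ↦ G i x is jointly measurable and G i is a probability density with respect to Lebesgue measure for every i ∈ ι, and let f₀ be a probability density on ℝ. Let (μₙ) be a sequence of probability measures on (ι, 𝒜). If for every ε > 0, μₙ({ i : h(G i, f₀) > ε }) → 0 as n → ∞, then h(gₙ*, f₀) → 0, where gₙ*(x) = ∫ G i x dμₙ(i) is the mixture (expected posterior) density. -/
/-! Since `t ↦ (√t - √c)²` is convex on `[0, ∞)`, Jensen's inequality at each point `x` and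
Fubini give `h²(gₙ*, f₀) ≤ ∫ h²(G i, f₀) dμₙ(i)`. As `h² ≤ 2` for probability densities, the
right-hand side is at most `ε² + 2 μₙ {i | ε < h(G i, f₀)}`, which is eventually small by
posterior consistency. -/

open MeasureTheory Filter
open scoped Topology

/-- Hellinger distance between two densities on `ℝ` (w.r.t. Lebesgue measure). -/
noncomputable def hellinger (f g : ℝ → ℝ) : ℝ :=
  Real.sqrt (∫ x, (Real.sqrt (f x) - Real.sqrt (g x)) ^ 2)

lemma Real.sq_sqrt_sub_sqrt_le_add {a b : ℝ} (ha : 0 ≤ a) (hb : 0 ≤ b) :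
    (√a - √b) ^ 2 ≤ a + b := by
  nlinarith [Real.sq_sqrt ha, Real.sq_sqrt hb, mul_nonneg (Real.sqrt_nonneg a) (Real.sqrt_nonneg b)]

lemma convexOn_sq_sqrt_sub_sqrt (c : ℝ) : ConvexOn ℝ (Set.Ici 0) fun t => (√t - √c) ^ 2 := by
  have hsqrt := (Real.strictConcaveOn_sqrt.concaveOn.smul (by positivity : 0 ≤ 2 * √c)).neg
  refine (((convexOn_id (convex_Ici 0)).add hsqrt).add
    (convexOn_const (√c ^ 2) (convex_Ici 0))).congr fun t (ht : 0 ≤ t) => ?_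
  simp only [Pi.add_apply, Pi.neg_apply, id, smul_eq_mul]
  nlinarith [Real.sq_sqrt ht]

section

variable {ι : Type*} [MeasurableSpace ι] {μ : Measure ι} [IsProbabilityMeasure μ]

lemma sq_sqrt_integral_sub_sqrt_le {u : ι → ℝ} (hu0 : ∀ᵐ i ∂μ, 0 ≤ u i) (hu : Integrable u μ)
    {c : ℝ} (hc : 0 ≤ c) : (√(∫ i, u i ∂μ) - √c) ^ 2 ≤ ∫ i, (√(u i) - √c) ^ 2 ∂μ := by
  refine (convexOn_sq_sqrt_sub_sqrt c).map_integral_le (by fun_prop) isClosed_Ici hu0 hu ?_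
  refine (hu.add (integrable_const c)).mono' ?_ (hu0.mono fun i hi => ?_)
  · exact (by fun_prop : Continuous fun t : ℝ => (√t - √c) ^ 2).comp_aestronglyMeasurable hu.1
  · rw [Function.comp_apply, Real.norm_of_nonneg (sq_nonneg _)]
    exact Real.sq_sqrt_sub_sqrt_le_add hi hc

lemma integral_le_add_mul_measureReal_lt {φ : ι → ℝ} (hφm : Measurable φ) (hφ0 : ∀ i, 0 ≤ φ i)
    {C t : ℝ} (hφC : ∀ i, φ i ≤ C) (ht : 0 ≤ t) :
    ∫ i, φ i ∂μ ≤ t + C * μ.real {i | t < φ i} := by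
  have hS : MeasurableSet {i | t < φ i} := measurableSet_lt measurable_const hφm
  calc ∫ i, φ i ∂μ ≤ ∫ i, (t + {i | t < φ i}.indicator (fun _ => C) i) ∂μ := by
        refine integral_mono_of_nonneg (ae_of_all _ hφ0)
          ((integrable_const t).add ((integrable_const C).indicator hS)) (ae_of_all _ fun i => ?_)
        by_cases hi : t < φ i
        · simp only [Set.indicator_of_mem (show i ∈ {i | t < φ i} from hi)]
          linarith [hφC i]
        · simp only [Set.indicator_of_notMem (show i ∉ {i | t < φ i} from hi)]
          linarith
    _ = t + C * μ.real {i | t < φ i} := by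
        rw [integral_add (integrable_const t) ((integrable_const C).indicator hS), integral_const,
          integral_indicator_const _ hS]
        simp [mul_comm]

end

lemma tendsto_nhds_zero_of_forall_le_add {β : Type*} {l : Filter β} {a : β → ℝ}
    (ha0 : ∀ b, 0 ≤ a b) (h : ∀ ε > 0, ∃ e : β → ℝ, Tendsto e l (𝓝 0) ∧ ∀ b, a b ≤ ε + e b) :
    Tendsto a l (𝓝 0) := by
  refine tendsto_order.2 ⟨fun r hr => Eventually.of_forall fun b => hr.trans_le (ha0 b),
    fun r hr => ?_⟩
  obtain ⟨e, he, hae⟩ := h (r / 2) (half_pos hr)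
  filter_upwards [(tendsto_order.1 he).2 _ (half_pos hr)] with b hb
  linarith [hae b]

section

variable {α ι : Type*} [MeasurableSpace α] [MeasurableSpace ι] {ν : Measure α} {μ : Measure ι}

noncomputable def hellingerSq (ν : Measure α) (f g : α → ℝ) : ℝ :=
  ∫ x, (√(f x) - √(g x)) ^ 2 ∂ν

lemma hellinger_eq_sqrt_hellingerSq (f g : ℝ → ℝ) : hellinger f g = √(hellingerSq volume f g) :=
  rfl

lemma hellingerSq_nonneg (ν : Measure α) (f g : α → ℝ) : 0 ≤ hellingerSq ν f g :=
  integral_nonneg fun _ => sq_nonneg _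

lemma hellingerSq_le_two {f g : α → ℝ} (hf0 : ∀ x, 0 ≤ f x) (hg0 : ∀ x, 0 ≤ g x)
    (hfi : Integrable f ν) (hgi : Integrable g ν) (hf1 : ∫ x, f x ∂ν = 1)
    (hg1 : ∫ x, g x ∂ν = 1) : hellingerSq ν f g ≤ 2 :=
  calc hellingerSq ν f g ≤ ∫ x, (f x + g x) ∂ν :=
        integral_mono_of_nonneg (ae_of_all _ fun _ => sq_nonneg _) (hfi.add hgi)
          (ae_of_all _ fun x => Real.sq_sqrt_sub_sqrt_le_add (hf0 x) (hg0 x))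
    _ = 2 := by rw [integral_add hfi hgi, hf1, hg1]; norm_num

lemma measurable_hellingerSq [SFinite ν] {G : ι → α → ℝ} (hGm : Measurable (Function.uncurry G))
    {f : α → ℝ} (hfm : Measurable f) : Measurable fun i => hellingerSq ν (G i) f :=
  ((hGm.sqrt.sub (hfm.comp measurable_snd).sqrt).pow_const 2).stronglyMeasurable
    |>.integral_prod_right' |>.measurable

variable [SFinite ν] {G : ι → α → ℝ} (hGm : Measurable (Function.uncurry G))
  (hG0 : ∀ i x, 0 ≤ G i x) (hGi : ∀ i, Integrable (G i) ν) (hG1 : ∀ i, ∫ x, G i x ∂ν = 1)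
include hGm hG0 hGi hG1

lemma integrable_uncurry_of_integral_eq_one [IsFiniteMeasure μ] :
    Integrable (Function.uncurry G) (μ.prod ν) := by
  refine (integrable_prod_iff hGm.aestronglyMeasurable).2 ⟨ae_of_all _ hGi, ?_⟩
  simp_rw [Function.uncurry_apply_pair, Real.norm_of_nonneg (hG0 _ _), hG1]
  exact integrable_const 1

lemma integrable_sq_sqrt_sub_sqrt_prod [IsFiniteMeasure μ] {f : α → ℝ} (hfm : Measurable f)
    (hf0 : ∀ x, 0 ≤ f x) (hfi : Integrable f ν) :
    Integrable (fun p : ι × α => (√(G p.1 p.2) - √(f p.2)) ^ 2) (μ.prod ν) := by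
  refine ((integrable_uncurry_of_integral_eq_one (μ := μ) hGm hG0 hGi hG1).add
    (hfi.comp_snd μ)).mono' ?_ (ae_of_all _ fun p => ?_)
  · exact ((hGm.sqrt.sub (hfm.comp measurable_snd).sqrt).pow_const 2).aestronglyMeasurable
  · rw [Real.norm_of_nonneg (sq_nonneg _)]
    exact Real.sq_sqrt_sub_sqrt_le_add (hG0 _ _) (hf0 _)

theorem hellingerSq_mixture_le [IsProbabilityMeasure μ] {f : α → ℝ} (hfm : Measurable f)
    (hf0 : ∀ x, 0 ≤ f x) (hfi : Integrable f ν) :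
    hellingerSq ν (fun x => ∫ i, G i x ∂μ) f ≤ ∫ i, hellingerSq ν (G i) f ∂μ := by
  have hF := integrable_sq_sqrt_sub_sqrt_prod (μ := μ) hGm hG0 hGi hG1 hfm hf0 hfi
  have hGx : ∀ᵐ x ∂ν, Integrable (fun i => G i x) μ :=
    (integrable_uncurry_of_integral_eq_one hGm hG0 hGi hG1).prod_left_ae
  calc hellingerSq ν (fun x => ∫ i, G i x ∂μ) f
      ≤ ∫ x, ∫ i, (√(G i x) - √(f x)) ^ 2 ∂μ ∂ν :=
        integral_mono_of_nonneg (ae_of_all _ fun _ => sq_nonneg _) hF.integral_prod_right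
          (hGx.mono fun x hx => sq_sqrt_integral_sub_sqrt_le (ae_of_all _ (hG0 · x)) hx (hf0 x))
    _ = ∫ i, hellingerSq ν (G i) f ∂μ :=
        (integral_integral_swap (f := fun i x => (√(G i x) - √(f x)) ^ 2) hF).symm

end

/-- Deterministic core of Part 1 of Theorem 1 of the paper: if the posteriors `μₙ`
concentrate in Hellinger distance around the true density `f₀` (condition A2), then
the mixture (expected a posteriori) densities `gₙ*(x) = ∫ G i x dμₙ(i)` converge to
`f₀` in Hellinger distance. -/
theorem stmt_5 {ι : Type*} [MeasurableSpace ι]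
    (G : ι → ℝ → ℝ) (hGm : Measurable fun p : ι × ℝ => G p.1 p.2)
    (hG0 : ∀ i x, 0 ≤ G i x) (hGi : ∀ i, Integrable (G i))
    (hG1 : ∀ i, ∫ x, G i x = 1)
    (f₀ : ℝ → ℝ) (hf₀m : Measurable f₀) (hf₀0 : ∀ x, 0 ≤ f₀ x)
    (hf₀i : Integrable f₀) (hf₀1 : ∫ x, f₀ x = 1)
    (μ : ℕ → Measure ι) [∀ n, IsProbabilityMeasure (μ n)]
    (hcons : ∀ ε : ℝ, 0 < ε →
      Tendsto (fun n => μ n {i | ε < hellinger (G i) f₀}) atTop (𝓝 0)) :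
    Tendsto (fun n => hellinger (fun x => ∫ i, G i x ∂μ n) f₀) atTop (𝓝 0) := by
  suffices Tendsto (fun n => hellingerSq volume (fun x => ∫ i, G i x ∂μ n) f₀) atTop (𝓝 0) by
    simpa only [hellinger_eq_sqrt_hellingerSq, Function.comp_def, Real.sqrt_zero] using
      (Real.continuous_sqrt.tendsto 0).comp this
  refine tendsto_nhds_zero_of_forall_le_add (fun n => hellingerSq_nonneg _ _ _) fun ε hε =>
    ⟨fun n => 2 * (μ n).real {i | ε < hellingerSq volume (G i) f₀}, ?_, fun n => ?_⟩
  · have := ((ENNReal.tendsto_toReal ENNReal.zero_ne_top).comp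
      (hcons √ε (Real.sqrt_pos.2 hε))).const_mul 2
    simpa [Function.comp_def, measureReal_def, hellinger_eq_sqrt_hellingerSq,
      Real.sqrt_lt_sqrt_iff hε.le] using this
  · calc hellingerSq volume (fun x => ∫ i, G i x ∂μ n) f₀
        ≤ ∫ i, hellingerSq volume (G i) f₀ ∂μ n :=
          hellingerSq_mixture_le hGm hG0 hGi hG1 hf₀m hf₀0 hf₀i
      _ ≤ ε + 2 * (μ n).real {i | ε < hellingerSq volume (G i) f₀} :=
          integral_le_add_mul_measureReal_lt (measurable_hellingerSq hGm hf₀m)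
            (fun i => hellingerSq_nonneg _ _ _)
            (fun i => hellingerSq_le_two (hG0 i) hf₀0 (hGi i) hf₀i (hG1 i) hf₀1) hε.le
end

section
/- Let Θ be a compact metric space, let f : Θ → (ℝ → ℝ) assign to each θ a probability density f_θ with respect to Lebesgue measure, with (θ, x) ↦ f_θ(x) measurable, and suppose that for almost every x the map θ ↦ f_θ(x) is continuous. Then for every probability density g on ℝ there exists θ* ∈ Θ such that h(f_{θ*}, g) = inf_{θ ∈ Θ} h(f_θ, g); that is, the minimum Hellinger distance functional T(g) is well-defined (possibly multivalued) on the space of densities. -/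
/-!
Write `L(θ) = ∫⁻ (√f_θ - √g)²`, so that `h(f_θ, g) = √L(θ)`. Pointwise, `θ ↦ (√f_θ(x) - √g(x))²`
is continuous for almost every `x`, so Fatou's lemma makes `L` lower semicontinuous; a lower
semicontinuous function attains its minimum on the compact space `Θ`. Integrability of `f_θ`
and `g` keeps `L` finite, so minimizing `L` is the same as minimizing the Hellinger distance.
-/

open MeasureTheory Filter Topology

theorem lowerSemicontinuous_lintegral {X α : Type*} [TopologicalSpace X]
    [FirstCountableTopology X] [MeasurableSpace α] {μ : Measure α} {F : X → α → ENNReal}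
    (hF : ∀ x, AEMeasurable (F x) μ) (hlsc : ∀ᵐ a ∂μ, LowerSemicontinuous fun x => F x a) :
    LowerSemicontinuous fun x => ∫⁻ a, F x a ∂μ := by
  refine lowerSemicontinuous_iff_le_liminf.2 fun x => ?_
  calc ∫⁻ a, F x a ∂μ ≤ ∫⁻ a, liminf (fun y => F y a) (𝓝 x) ∂μ :=
        lintegral_mono_ae (hlsc.mono fun a ha => ha.le_liminf x)
    _ ≤ liminf (fun y => ∫⁻ a, F y a ∂μ) (𝓝 x) := lintegral_liminf_le' hF

theorem Real.sqrt_sub_sqrt_sq_le (a b : ℝ) : (√a - √b) ^ 2 ≤ 2 * (|a| + |b|) := by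
  have hsq : ∀ c : ℝ, √c ^ 2 ≤ |c| := fun c => by
    rw [Real.sq_sqrt']
    exact max_le (le_abs_self c) (abs_nonneg c)
  nlinarith [hsq a, hsq b, sq_nonneg (√a + √b)]

theorem integrable_sqrt_sub_sqrt_sq {α : Type*} [MeasurableSpace α] {μ : Measure α}
    {f g : α → ℝ} (hf : Integrable f μ) (hg : Integrable g μ) :
    Integrable (fun x => (√(f x) - √(g x)) ^ 2) μ := by
  refine ((hf.abs.add hg.abs).const_mul 2).mono' ?_ (ae_of_all _ fun x => ?_)
  · exact ((Real.continuous_sqrt.comp_aestronglyMeasurable hf.aestronglyMeasurable).sub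
      (Real.continuous_sqrt.comp_aestronglyMeasurable hg.aestronglyMeasurable)).pow 2
  · rw [Real.norm_of_nonneg (sq_nonneg _)]
    exact Real.sqrt_sub_sqrt_sq_le (f x) (g x)

theorem ofReal_hellinger_sq {f g : ℝ → ℝ} (hf : Integrable f) (hg : Integrable g) :
    ENNReal.ofReal (hellinger f g ^ 2) = ∫⁻ x, ENNReal.ofReal ((√(f x) - √(g x)) ^ 2) := by
  rw [hellinger, Real.sq_sqrt (integral_nonneg fun x => sq_nonneg _),
    ofReal_integral_eq_lintegral_ofReal (integrable_sqrt_sub_sqrt_sq hf hg)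
      (ae_of_all _ fun x => sq_nonneg _)]

theorem hellinger_le_hellinger_of_lintegral_le {f₁ f₂ g : ℝ → ℝ} (hf₁ : Integrable f₁)
    (hf₂ : Integrable f₂) (hg : Integrable g)
    (h : ∫⁻ x, ENNReal.ofReal ((√(f₁ x) - √(g x)) ^ 2)
      ≤ ∫⁻ x, ENNReal.ofReal ((√(f₂ x) - √(g x)) ^ 2)) :
    hellinger f₁ g ≤ hellinger f₂ g := by
  rw [← ofReal_hellinger_sq hf₁ hg, ← ofReal_hellinger_sq hf₂ hg,
    ENNReal.ofReal_le_ofReal_iff (sq_nonneg _)] at h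
  exact (sq_le_sq₀ (Real.sqrt_nonneg _) (Real.sqrt_nonneg _)).1 h

theorem stmt_8_general {Θ : Type*} [MetricSpace Θ] [CompactSpace Θ] [Nonempty Θ]
    (f : Θ → ℝ → ℝ)
    (hfi : ∀ θ, Integrable (f θ))
    (hcont : ∀ᵐ x ∂(volume : Measure ℝ), Continuous fun θ => f θ x)
    (g : ℝ → ℝ)
    (hgi : Integrable g) :
    ∃ θstar : Θ, hellinger (f θstar) g = ⨅ θ : Θ, hellinger (f θ) g := by
  have hL : LowerSemicontinuous fun θ => ∫⁻ x, ENNReal.ofReal ((√(f θ x) - √(g x)) ^ 2) :=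
    lowerSemicontinuous_lintegral
      (fun θ => (integrable_sqrt_sub_sqrt_sq (hfi θ) hgi).aemeasurable.ennreal_ofReal)
      (hcont.mono fun x hx =>
        (ENNReal.continuous_ofReal.comp (by fun_prop)).lowerSemicontinuous)
  obtain ⟨θstar, -, hmin⟩ :=
    (hL.lowerSemicontinuousOn _).exists_isMinOn Set.univ_nonempty isCompact_univ
  have hle : ∀ θ, hellinger (f θstar) g ≤ hellinger (f θ) g := fun θ =>
    hellinger_le_hellinger_of_lintegral_le (hfi θstar) (hfi θ) hgi (hmin (Set.mem_univ θ))
  exact ⟨θstar, (ciInf_eq_of_forall_ge_of_forall_gt_exists_lt hle fun _ hw => ⟨θstar, hw⟩).symm⟩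

/-- Existence of the minimum Hellinger distance functional `T(g)` under condition A1
of the paper: for `Θ` compact and `θ ↦ f_θ(x)` continuous for almost every `x`, the
infimum `inf_{θ∈Θ} h(f_θ, g)` is attained at some `θ* ∈ Θ`. -/
theorem stmt_8 {Θ : Type*} [MetricSpace Θ] [CompactSpace Θ] [Nonempty Θ]
    [MeasurableSpace Θ] [BorelSpace Θ]
    (f : Θ → ℝ → ℝ) (hfm : Measurable fun p : Θ × ℝ => f p.1 p.2)
    (hf0 : ∀ θ x, 0 ≤ f θ x) (hfi : ∀ θ, Integrable (f θ))
    (hf1 : ∀ θ, ∫ x, f θ x = 1)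
    (hcont : ∀ᵐ x ∂(volume : Measure ℝ), Continuous fun θ => f θ x)
    (g : ℝ → ℝ) (hgm : Measurable g) (hg0 : ∀ x, 0 ≤ g x)
    (hgi : Integrable g) (hg1 : ∫ x, g x = 1) :
    ∃ θstar : Θ, hellinger (f θstar) g = ⨅ θ : Θ, hellinger (f θ) g :=
  stmt_8_general f hfi hcont g hgi
end

section
/- Let g₀ be a probability density on [0,1] with c ≤ g₀(x) ≤ C for all x, where 0 < c ≤ C < ∞, let k ≥ 1, and let g* be any probability density on [0,1] that is constant on each interval I_j = [(j−1)/k, j/k) and satisfies c ≤ g*(x) ≤ C. Then h(g₀, g₀_{[k]})² ≤ (C/c) · h(g₀, g*)², where g₀_{[k]} = k Σ_{j=1}^k (∫_{I_j} g₀) 1_{I_j} is the histogram projection of g₀. In particular the projection chain h(g₀, g₀_{[k]})² ≲ ∫ (g₀ − g₀_{[k]})² ≤ ∫ (g₀ − g*)² ≲ h(g₀, g*)² holds. -/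
open MeasureTheory

/-- The `j`-th bin (for `j = 0, …, k−1`) of the regular `k`-bin partition of `[0,1)`. -/
def histBin (k j : ℕ) : Set ℝ := Set.Ico ((j : ℝ) / k) (((j : ℝ) + 1) / k)

/-- The histogram projection `g_{[k]} = k Σ_j (∫_{I_j} g) 1_{I_j}` of `g` onto
regular `k`-bin histograms on `[0,1)`. -/
noncomputable def histProj (k : ℕ) (g : ℝ → ℝ) : ℝ → ℝ := fun x =>
  ∑ j ∈ Finset.range k,
    (histBin k j).indicator (fun _ => (k : ℝ) * ∫ y in histBin k j, g y) x

/-- `m` is a regular `k`-bin histogram on `[0,1)`: it is constant on each bin `I_j`. -/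
def IsHistogram (k : ℕ) (m : ℝ → ℝ) : Prop :=
  ∀ j < k, ∀ x ∈ histBin k j, ∀ y ∈ histBin k j, m x = m y

/-!
On a bin `I_j` the projection `g₀_{[k]}` equals the mean `a_j` of `g₀` over `I_j`, and `g*` equals a
constant `m_j`; all values lie in `[c, C]`. Since `(a - b)² = (√a - √b)² (√a + √b)²` and
`4c ≤ (√a + √b)² ≤ 4C` there, squared Hellinger and `L²` distances agree up to the factors `1/(4c)`
and `4C`, while the mean minimises `∫_{I_j} (g₀ - m)²` over constants `m`. Hence on each bin
`h² ≤ ‖g₀ - a_j‖²/(4c) ≤ ‖g₀ - m_j‖²/(4c) ≤ (C/c) h(g₀, m_j)²`; sum over the bins.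
-/

open Set Function

namespace Real

lemma sq_sub_eq_sq_sqrt_sub_mul_sq_sqrt_add {a b : ℝ} (ha : 0 ≤ a) (hb : 0 ≤ b) :
    (a - b) ^ 2 = (√a - √b) ^ 2 * (√a + √b) ^ 2 := by
  rw [← mul_pow, mul_comm, ← sq_sub_sq, sq_sqrt ha, sq_sqrt hb]

lemma sq_sqrt_sub_sqrt_le {a b c : ℝ} (hc : 0 < c) (ha : c ≤ a) (hb : c ≤ b) :
    (√a - √b) ^ 2 ≤ (a - b) ^ 2 / (4 * c) := by
  have hsum : 4 * c ≤ (√a + √b) ^ 2 := by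
    have hca := sqrt_le_sqrt ha
    have hcb := sqrt_le_sqrt hb
    nlinarith [sq_sqrt hc.le, sqrt_nonneg c]
  rw [le_div_iff₀ (by positivity),
    sq_sub_eq_sq_sqrt_sub_mul_sq_sqrt_add (hc.le.trans ha) (hc.le.trans hb)]
  exact mul_le_mul_of_nonneg_left hsum (sq_nonneg _)

lemma sq_sub_le_mul_sq_sqrt_sub_sqrt {a b C : ℝ} (ha : 0 ≤ a) (hb : 0 ≤ b) (haC : a ≤ C)
    (hbC : b ≤ C) : (a - b) ^ 2 ≤ 4 * C * (√a - √b) ^ 2 := by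
  have hsum : (√a + √b) ^ 2 ≤ 4 * C := by
    have haC' := sqrt_le_sqrt haC
    have hbC' := sqrt_le_sqrt hbC
    nlinarith [sq_sqrt (ha.trans haC), sqrt_nonneg a, sqrt_nonneg b]
  rw [sq_sub_eq_sq_sqrt_sub_mul_sq_sqrt_add ha hb, mul_comm (4 * C)]
  exact mul_le_mul_of_nonneg_left hsum (sq_nonneg _)

end Real

section Average

variable {α : Type*} [MeasurableSpace α] {μ : Measure α} [IsFiniteMeasure μ] {f : α → ℝ}

lemma integrable_sq_sqrt_sub_sqrt {C : ℝ} (hf : AEStronglyMeasurable f μ)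
    (hfC : ∀ᵐ x ∂μ, f x ≤ C) (m : ℝ) : Integrable (fun x => (√(f x) - √m) ^ 2) μ := by
  refine Integrable.of_bound (by fun_prop) ((√C + √m) ^ 2) (hfC.mono fun x hx => ?_)
  have hdiff : |√(f x) - √m| ≤ √C + √m := by
    refine (abs_sub _ _).trans ?_
    rw [abs_of_nonneg (Real.sqrt_nonneg _), abs_of_nonneg (Real.sqrt_nonneg _)]
    gcongr
  rw [Real.norm_of_nonneg (sq_nonneg _)]
  exact sq_le_sq' (abs_le.1 hdiff).1 (abs_le.1 hdiff).2

lemma integral_sq_sub_average_le (hf : MemLp f 2 μ) (m : ℝ) :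
    ∫ x, (f x - ⨍ y, f y ∂μ) ^ 2 ∂μ ≤ ∫ x, (f x - m) ^ 2 ∂μ := by
  set a := ⨍ y, f y ∂μ
  have hfa : Integrable (fun x => (f x - a) ^ 2) μ := (hf.sub (memLp_const a)).integrable_sq
  have hf1 : Integrable (fun x => f x - a) μ :=
    (hf.integrable one_le_two).sub (integrable_const a)
  have hsplit : ∫ x, (f x - m) ^ 2 ∂μ = ∫ x, (f x - a) ^ 2 ∂μ + μ.real univ * (a - m) ^ 2 := by
    have hpt : (fun x => (f x - m) ^ 2) =
        fun x => ((f x - a) ^ 2 + 2 * (a - m) * (f x - a)) + (a - m) ^ 2 := by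
      ext x; ring
    have hlin : Integrable (fun x => (f x - a) ^ 2 + 2 * (a - m) * (f x - a)) μ :=
      hfa.add (hf1.const_mul _)
    rw [hpt, integral_add hlin (integrable_const _), integral_add hfa (hf1.const_mul _),
      integral_const_mul, integral_sub_average, integral_const, smul_eq_mul]
    ring
  rw [hsplit]
  exact le_add_of_nonneg_right (by positivity)

lemma integral_sq_sqrt_sub_sqrt_average_le {c C m : ℝ} (hμ : μ ≠ 0) (hc : 0 < c)
    (hf : AEStronglyMeasurable f μ) (hfb : ∀ᵐ x ∂μ, f x ∈ Icc c C) (hm : 0 ≤ m) (hmC : m ≤ C) :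
    ∫ x, (√(f x) - √(⨍ y, f y ∂μ)) ^ 2 ∂μ ≤ C / c * ∫ x, (√(f x) - √m) ^ 2 ∂μ := by
  have : NeZero μ := ⟨hμ⟩
  set a := ⨍ y, f y ∂μ
  have hf2 : MemLp f 2 μ := MemLp.of_bound hf C <| hfb.mono fun x hx => by
    rw [Real.norm_of_nonneg (hc.le.trans hx.1)]; exact hx.2
  have ha : a ∈ Icc c C :=
    (convex_Icc c C).average_mem isClosed_Icc hfb (hf2.integrable one_le_two)
  calc ∫ x, (√(f x) - √a) ^ 2 ∂μ
      ≤ ∫ x, (f x - a) ^ 2 / (4 * c) ∂μ :=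
        integral_mono_of_nonneg (ae_of_all _ fun _ => sq_nonneg _)
          ((hf2.sub (memLp_const a)).integrable_sq.div_const _)
          (hfb.mono fun x hx => Real.sq_sqrt_sub_sqrt_le hc hx.1 ha.1)
    _ = (∫ x, (f x - a) ^ 2 ∂μ) / (4 * c) := integral_div _ _
    _ ≤ (∫ x, (f x - m) ^ 2 ∂μ) / (4 * c) :=
        div_le_div_of_nonneg_right (integral_sq_sub_average_le hf2 m) (by positivity)
    _ ≤ (∫ x, 4 * C * (√(f x) - √m) ^ 2 ∂μ) / (4 * c) := by
        refine div_le_div_of_nonneg_right ?_ (by positivity)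
        exact integral_mono_of_nonneg (ae_of_all _ fun _ => sq_nonneg _)
          ((integrable_sq_sqrt_sub_sqrt hf (hfb.mono fun _ hx => hx.2) m).const_mul _)
          (hfb.mono fun x hx =>
            Real.sq_sub_le_mul_sq_sqrt_sub_sqrt (hc.le.trans hx.1) hm hx.2 hmC)
    _ = C / c * ∫ x, (√(f x) - √m) ^ 2 ∂μ := by
        rw [integral_const_mul]; field_simp

end Average

section Histogram

variable {k j : ℕ}

lemma histBin_eq_Ico_natCast (k j : ℕ) :
    histBin k j = Ico ((j : ℝ) / k) (((j + 1 : ℕ) : ℝ) / k) := by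
  rw [histBin, Nat.cast_succ]

lemma measurableSet_histBin (k j : ℕ) : MeasurableSet (histBin k j) := measurableSet_Ico

instance (k j : ℕ) : IsFiniteMeasure (volume.restrict (histBin k j)) :=
  inferInstanceAs (IsFiniteMeasure (volume.restrict (Ico _ _)))

lemma measureReal_histBin (k j : ℕ) : volume.real (histBin k j) = (k : ℝ)⁻¹ := by
  rw [histBin, Real.volume_real_Ico, max_eq_left (by ring_nf; positivity)]
  ring

lemma restrict_histBin_ne_zero (hk : 1 ≤ k) : volume.restrict (histBin k j) ≠ 0 := by
  rw [Ne, Measure.restrict_eq_zero,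
    ← measureReal_eq_zero_iff (s := histBin k j) measure_Ico_lt_top.ne, measureReal_histBin]
  positivity

lemma pairwise_disjoint_histBin (k : ℕ) : Pairwise (Disjoint on histBin k) := by
  have hmono : Monotone fun j : ℕ => (j : ℝ) / k := fun i j hij => by
    dsimp only; gcongr
  convert hmono.pairwise_disjoint_on_Ico_succ using 3 with j
  rw [histBin_eq_Ico_natCast, Order.succ_eq_add_one]

lemma histBin_subset_Ico (hj : j < k) : histBin k j ⊆ Ico 0 1 := by
  have hk : (0 : ℝ) < k := by exact_mod_cast j.zero_le.trans_lt hj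
  have hjk : (j : ℝ) + 1 ≤ k := by exact_mod_cast hj
  rintro x ⟨hjx, hxj⟩
  exact ⟨le_trans (by positivity) hjx, hxj.trans_le ((div_le_one hk).2 hjk)⟩

lemma biUnion_histBin (hk : 1 ≤ k) : ⋃ j ∈ Finset.range k, histBin k j = Ico 0 1 := by
  refine Subset.antisymm
    (iUnion₂_subset fun j hj => histBin_subset_Ico (Finset.mem_range.1 hj)) ?_
  have hk0 : (k : ℝ) ≠ 0 := by positivity
  simpa [histBin_eq_Ico_natCast, hk0] using
    Ico_subset_biUnion_Ico k fun j : ℕ => (j : ℝ) / k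

lemma histProj_eq_setAverage (hj : j < k) (g : ℝ → ℝ) {x : ℝ} (hx : x ∈ histBin k j) :
    histProj k g x = ⨍ y in histBin k j, g y := by
  rw [histProj, Finset.sum_eq_single_of_mem j (Finset.mem_range.2 hj)
      fun i _ hij =>
        indicator_of_notMem ((pairwise_disjoint_histBin k hij).notMem_of_mem_right hx) _,
    indicator_of_mem hx, setAverage_eq, measureReal_histBin, inv_inv, smul_eq_mul]

lemma left_mem_histBin (hj : j < k) : (j : ℝ) / k ∈ histBin k j :=
  ⟨le_rfl, div_lt_div_of_pos_right (lt_add_one _) (by exact_mod_cast j.zero_le.trans_lt hj)⟩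

lemma IsHistogram.eq_of_mem_histBin {m : ℝ → ℝ} (hm : IsHistogram k m) (hj : j < k) {x : ℝ}
    (hx : x ∈ histBin k j) : m x = m (j / k) :=
  hm j hj x hx _ (left_mem_histBin hj)

lemma setIntegral_Ico_eq_sum_histBin_of_eqOn (hk : 1 ≤ k) {F : ℝ → ℝ} {G : ℕ → ℝ → ℝ}
    (hFG : ∀ j < k, EqOn F (G j) (histBin k j)) (hG : ∀ j < k, IntegrableOn (G j) (histBin k j)) :
    ∫ x in Ico 0 1, F x = ∑ j ∈ Finset.range k, ∫ x in histBin k j, G j x := by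
  rw [← biUnion_histBin hk, integral_biUnion_finset _ (fun j _ => measurableSet_histBin k j)
    (fun i _ j _ hij => pairwise_disjoint_histBin k hij) fun j hj =>
      (integrableOn_congr_fun (hFG j (Finset.mem_range.1 hj)) (measurableSet_histBin k j)).2
        (hG j (Finset.mem_range.1 hj))]
  exact Finset.sum_congr rfl fun j hj =>
    setIntegral_congr_fun (measurableSet_histBin k j) (hFG j (Finset.mem_range.1 hj))

end Histogram

theorem stmt_12_general (g₀ gstar : ℝ → ℝ) (c C : ℝ) (hc : 0 < c)
    (k : ℕ) (hk : 1 ≤ k)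
    (hg₀m : Measurable g₀)
    (hg₀b : ∀ x ∈ Set.Ico (0 : ℝ) 1, c ≤ g₀ x ∧ g₀ x ≤ C)
    (hgsH : IsHistogram k gstar)
    (hgsb : ∀ x ∈ Set.Ico (0 : ℝ) 1, c ≤ gstar x ∧ gstar x ≤ C) :
    ∫ x in Set.Ico (0 : ℝ) 1,
        (Real.sqrt (g₀ x) - Real.sqrt (histProj k g₀ x)) ^ 2 ≤
      (C / c) * ∫ x in Set.Ico (0 : ℝ) 1,
        (Real.sqrt (g₀ x) - Real.sqrt (gstar x)) ^ 2 := by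
  have hg₀bin : ∀ j < k, ∀ᵐ x ∂volume.restrict (histBin k j), g₀ x ∈ Icc c C := fun j hj =>
    ae_restrict_of_forall_mem (measurableSet_histBin k j) fun x hx =>
      hg₀b x (histBin_subset_Ico hj hx)
  have hint : ∀ j < k, ∀ m, IntegrableOn (fun x => (√(g₀ x) - √m) ^ 2) (histBin k j) :=
    fun j hj => integrable_sq_sqrt_sub_sqrt hg₀m.aestronglyMeasurable
      ((hg₀bin j hj).mono fun _ hx => hx.2)
  have hproj : ∀ j < k, EqOn (fun x => (√(g₀ x) - √(histProj k g₀ x)) ^ 2)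
      (fun x => (√(g₀ x) - √(⨍ y in histBin k j, g₀ y)) ^ 2) (histBin k j) :=
    fun j hj x hx => by simp only [histProj_eq_setAverage hj g₀ hx]
  have hstar : ∀ j < k, EqOn (fun x => (√(g₀ x) - √(gstar x)) ^ 2)
      (fun x => (√(g₀ x) - √(gstar (j / k))) ^ 2) (histBin k j) :=
    fun j hj x hx => by simp only [hgsH.eq_of_mem_histBin hj hx]
  rw [setIntegral_Ico_eq_sum_histBin_of_eqOn hk hproj fun j hj => hint j hj _,
    setIntegral_Ico_eq_sum_histBin_of_eqOn hk hstar fun j hj => hint j hj _, Finset.mul_sum]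
  refine Finset.sum_le_sum fun j hj => ?_
  have hj : j < k := Finset.mem_range.1 hj
  obtain ⟨hcm, hmC⟩ := hgsb _ (histBin_subset_Ico hj (left_mem_histBin hj))
  exact integral_sq_sqrt_sub_sqrt_average_le (restrict_histBin_ne_zero hk) hc
    hg₀m.aestronglyMeasurable (hg₀bin j hj) (hc.le.trans hcm) hmC

/-- Content of the proof of Lemma 3 of the paper: for a density `g₀` on `[0,1]`
bounded in `[c, C]` and any histogram density `g*` with the same bounds,
`h(g₀, g₀_{[k]})² ≤ (C/c) · h(g₀, g*)²`, via the comparability of Hellinger and L²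
distances and the L²-minimality of the histogram projection. -/
theorem stmt_12 (g₀ gstar : ℝ → ℝ) (c C : ℝ) (hc : 0 < c) (hcC : c ≤ C)
    (k : ℕ) (hk : 1 ≤ k)
    (hg₀m : Measurable g₀)
    (hg₀b : ∀ x ∈ Set.Ico (0 : ℝ) 1, c ≤ g₀ x ∧ g₀ x ≤ C)
    (hg₀1 : ∫ x in Set.Ico (0 : ℝ) 1, g₀ x = 1)
    (hgsH : IsHistogram k gstar)
    (hgsb : ∀ x ∈ Set.Ico (0 : ℝ) 1, c ≤ gstar x ∧ gstar x ≤ C)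
    (hgs1 : ∫ x in Set.Ico (0 : ℝ) 1, gstar x = 1) :
    ∫ x in Set.Ico (0 : ℝ) 1,
        (Real.sqrt (g₀ x) - Real.sqrt (histProj k g₀ x)) ^ 2 ≤
      (C / c) * ∫ x in Set.Ico (0 : ℝ) 1,
        (Real.sqrt (g₀ x) - Real.sqrt (gstar x)) ^ 2 :=
  stmt_12_general g₀ gstar c C hc k hk hg₀m hg₀b hgsH hgsb
end

section
/- Let f and φ be probability densities on ℝ with respect to Lebesgue measure, let α ∈ [0,1], let ε > 0, and for z ∈ ℝ let δ_z = (1/(2ε)) 1_{(z−ε, z+ε)} be the uniform density on (z−ε, z+ε). Then lim_{z→∞} ∫ √( ((1−α) f(x) + α δ_z(x)) · φ(x) ) dx = √(1−α) · ∫ √( f(x) φ(x) ) dx. Equivalently, lim_{z→∞} h( (1−α) f + α δ_z, φ )² = 2 − 2√(1−α) ∫ √(f φ). -/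
open MeasureTheory Filter
open scoped Topology

/-!
The affinity of the mixture with `φ` is squeezed pointwise:
`√((1-α) f φ) ≤ √(((1-α) f + α δ_z) φ) ≤ √((1-α) f φ) + √(α δ_z φ)`.
Since `δ_z` lives on `(z - ε, z + ε)`, Cauchy–Schwarz gives
`∫ √(α δ_z φ) ≤ √α (∫_{(z-ε, z+ε)} φ)^{1/2}`, which tends to `0` because `φ` is integrable.
The Hellinger form follows from `∫ (√g - √φ)² = ∫ g + ∫ φ - 2 ∫ √(g φ)`, both masses being `1`.
-/

theorem Real.sqrt_add_le_add_sqrt {a b : ℝ} (ha : 0 ≤ a) (hb : 0 ≤ b) : √(a + b) ≤ √a + √b :=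
  Real.sqrt_le_iff.2 ⟨by positivity, by
    nlinarith [Real.sq_sqrt ha, Real.sq_sqrt hb, Real.sqrt_nonneg a, Real.sqrt_nonneg b]⟩

theorem Real.sqrt_mul_le_abs_add_abs (a b : ℝ) : √(a * b) ≤ |a| + |b| :=
  Real.sqrt_le_iff.2 ⟨by positivity, by
    nlinarith [le_abs_self (a * b), abs_mul a b, abs_nonneg a, abs_nonneg b]⟩

section Affinity

variable {X : Type*} [MeasurableSpace X] {μ : Measure X} {g φ : X → ℝ}

theorem integrable_sqrt_mul (hg : Integrable g μ) (hφ : Integrable φ μ) :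
    Integrable (fun x => √(g x * φ x)) μ :=
  (hg.abs.add hφ.abs).mono'
    (hg.aemeasurable.mul hφ.aemeasurable).sqrt.aestronglyMeasurable
    (.of_forall fun x => by
      rw [Real.norm_of_nonneg (Real.sqrt_nonneg _)]
      exact Real.sqrt_mul_le_abs_add_abs _ _)

theorem memLp_two_sqrt_of_integrable (hg : Integrable g μ) (hg0 : 0 ≤ g) :
    MemLp (fun x => √(g x)) (ENNReal.ofReal 2) μ := by
  rw [ENNReal.ofReal_ofNat, memLp_two_iff_integrable_sq hg.aemeasurable.sqrt.aestronglyMeasurable]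
  simpa only [Real.sq_sqrt (hg0 _)] using hg

theorem integral_sqrt_mul_le (hg : Integrable g μ) (hφ : Integrable φ μ) (hg0 : 0 ≤ g)
    (hφ0 : 0 ≤ φ) : ∫ x, √(g x * φ x) ∂μ ≤ √(∫ x, g x ∂μ) * √(∫ x, φ x ∂μ) := by
  have := integral_mul_le_Lp_mul_Lq_of_nonneg Real.HolderConjugate.two_two
    (.of_forall fun x => Real.sqrt_nonneg (g x)) (.of_forall fun x => Real.sqrt_nonneg (φ x))
    (memLp_two_sqrt_of_integrable hg hg0) (memLp_two_sqrt_of_integrable hφ hφ0)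
  simpa only [Real.rpow_two, Real.sq_sqrt (hg0 _), Real.sq_sqrt (hφ0 _), ← Real.sqrt_eq_rpow,
    ← Real.sqrt_mul (hg0 _)] using this

theorem integral_sqrt_sub_sqrt_sq (hg : Integrable g μ) (hφ : Integrable φ μ) (hg0 : 0 ≤ g)
    (hφ0 : 0 ≤ φ) :
    ∫ x, (√(g x) - √(φ x)) ^ 2 ∂μ = ∫ x, g x ∂μ + ∫ x, φ x ∂μ - 2 * ∫ x, √(g x * φ x) ∂μ := by
  have hsq : ∀ x, (√(g x) - √(φ x)) ^ 2 = g x + φ x - 2 * √(g x * φ x) := fun x => by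
    rw [sub_sq, Real.sq_sqrt (hg0 x), Real.sq_sqrt (hφ0 x), Real.sqrt_mul (hg0 x)]
    ring
  simp_rw [hsq]
  have hgφ : Integrable (fun x => g x + φ x) μ := hg.add hφ
  rw [integral_sub hgφ ((integrable_sqrt_mul hg hφ).const_mul 2), integral_add hg hφ,
    integral_const_mul]

theorem tendsto_integral_sqrt_add_mul {ι : Type*} {l : Filter ι} {h : ι → X → ℝ}
    (hg : Integrable g μ) (hφ : Integrable φ μ) (hh : ∀ i, Integrable (h i) μ) (hg0 : 0 ≤ g)
    (hφ0 : 0 ≤ φ) (hh0 : ∀ i, 0 ≤ h i)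
    (hlim : Tendsto (fun i => ∫ x, √(h i x * φ x) ∂μ) l (𝓝 0)) :
    Tendsto (fun i => ∫ x, √((g x + h i x) * φ x) ∂μ) l (𝓝 (∫ x, √(g x * φ x) ∂μ)) := by
  have hgφ := integrable_sqrt_mul hg hφ
  have hsum : ∀ i, Integrable (fun x => √((g x + h i x) * φ x)) μ := fun i =>
    integrable_sqrt_mul (hg.add (hh i)) hφ
  refine tendsto_of_tendsto_of_tendsto_of_le_of_le tendsto_const_nhds
    (by simpa using tendsto_const_nhds.add hlim) (fun i => ?_) (fun i => ?_)
  · exact integral_mono hgφ (hsum i) fun x => Real.sqrt_le_sqrt <|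
      mul_le_mul_of_nonneg_right (le_add_of_nonneg_right (hh0 i x)) (hφ0 x)
  · rw [← integral_add hgφ (integrable_sqrt_mul (hh i) hφ)]
    refine integral_mono (hsum i) (hgφ.add (integrable_sqrt_mul (hh i) hφ)) fun x => ?_
    rw [add_mul]
    exact Real.sqrt_add_le_add_sqrt (mul_nonneg (hg0 x) (hφ0 x)) (mul_nonneg (hh0 i x) (hφ0 x))

end Affinity

theorem tendsto_setIntegral_Ioo_atTop {φ : ℝ → ℝ} (hφ : Integrable φ) (ε : ℝ) :
    Tendsto (fun z => ∫ x in Set.Ioo (z - ε) (z + ε), φ x) atTop (𝓝 0) := by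
  have hdom := tendsto_integral_filter_of_dominated_convergence (l := atTop) (μ := volume)
    (F := fun z => (Set.Ioo (z - ε) (z + ε)).indicator φ) (f := fun _ => 0) (fun x => ‖φ x‖)
    (.of_forall fun z => (hφ.indicator measurableSet_Ioo).aestronglyMeasurable)
    (.of_forall fun z => .of_forall fun x => norm_indicator_le_norm_self _ _) hφ.norm
    (.of_forall fun x => ?_)
  · simpa only [integral_indicator measurableSet_Ioo, integral_zero] using hdom
  · refine tendsto_const_nhds.congr' ?_
    filter_upwards [eventually_ge_atTop (x + ε)] with z hz
    rw [Set.indicator_of_notMem fun hx => by linarith [hx.1]]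

-- The paper's `δ_z`: the point mass at `z` spread uniformly over `(z - ε, z + ε)`.
noncomputable def uniformDensity (z ε : ℝ) : ℝ → ℝ :=
  (Set.Ioo (z - ε) (z + ε)).indicator fun _ => 1 / (2 * ε)

theorem uniformDensity_nonneg (z ε : ℝ) : 0 ≤ uniformDensity z ε :=
  Set.indicator_nonneg fun x (hx : x ∈ Set.Ioo _ _) => by
    have : 0 < ε := by linarith [hx.1.trans hx.2]
    positivity


theorem integrable_uniformDensity (z ε : ℝ) : Integrable (uniformDensity z ε) :=
  (integrable_indicator_iff measurableSet_Ioo).2 <|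
    integrableOn_const (by rw [Real.volume_Ioo]; exact ENNReal.ofReal_ne_top)

theorem integral_uniformDensity (z : ℝ) {ε : ℝ} (hε : 0 < ε) : ∫ x, uniformDensity z ε x = 1 := by
  rw [uniformDensity, integral_indicator_const _ measurableSet_Ioo, Real.volume_real_Ioo_of_le
    (by linarith), smul_eq_mul]
  field_simp
  ring

theorem uniformDensity_mul_indicator (z ε : ℝ) (φ : ℝ → ℝ) (x : ℝ) :
    uniformDensity z ε x * (Set.Ioo (z - ε) (z + ε)).indicator φ x =
      uniformDensity z ε x * φ x := by
  by_cases hx : x ∈ Set.Ioo (z - ε) (z + ε) <;> simp [uniformDensity, hx]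

theorem tendsto_integral_sqrt_uniformDensity_mul {φ : ℝ → ℝ} (hφ : Integrable φ) (hφ0 : 0 ≤ φ)
    {c ε : ℝ} (hc : 0 ≤ c) (hε : 0 < ε) :
    Tendsto (fun z => ∫ x, √(c * uniformDensity z ε x * φ x)) atTop (𝓝 0) := by
  have hbound : ∀ z, ∫ x, √(c * uniformDensity z ε x * φ x) ≤
      √c * √(∫ x in Set.Ioo (z - ε) (z + ε), φ x) := fun z => by
    have hcs := integral_sqrt_mul_le ((integrable_uniformDensity z ε).const_mul c)
      (hφ.indicator (measurableSet_Ioo (a := z - ε) (b := z + ε))) (fun x => mul_nonneg hc (uniformDensity_nonneg z ε x))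
      (Set.indicator_nonneg fun x _ => hφ0 x)
    simpa only [mul_assoc, uniformDensity_mul_indicator, integral_const_mul,
      integral_uniformDensity z hε, mul_one, integral_indicator measurableSet_Ioo] using hcs
  have hlim : Tendsto (fun z => √c * √(∫ x in Set.Ioo (z - ε) (z + ε), φ x)) atTop (𝓝 0) := by
    simpa using ((tendsto_setIntegral_Ioo_atTop hφ ε).sqrt).const_mul √c
  exact tendsto_of_tendsto_of_tendsto_of_le_of_le tendsto_const_nhds hlim
    (fun z => integral_nonneg fun x => Real.sqrt_nonneg _) hbound

theorem stmt_14_general (f φ : ℝ → ℝ)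
    (hf0 : ∀ x, 0 ≤ f x) (hφ0 : ∀ x, 0 ≤ φ x)
    (hfi : Integrable f) (hφi : Integrable φ)
    (hf1 : ∫ x, f x = 1) (hφ1 : ∫ x, φ x = 1)
    (α : ℝ) (hα0 : 0 ≤ α) (hα1 : α ≤ 1) (ε : ℝ) (hε : 0 < ε) :
    Tendsto
      (fun z : ℝ => ∫ x, Real.sqrt
        (((1 - α) * f x +
          α * (Set.Ioo (z - ε) (z + ε)).indicator (fun _ => 1 / (2 * ε)) x) * φ x))
      atTop (𝓝 (Real.sqrt (1 - α) * ∫ x, Real.sqrt (f x * φ x))) ∧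
    Tendsto
      (fun z : ℝ => ∫ x,
        (Real.sqrt ((1 - α) * f x +
            α * (Set.Ioo (z - ε) (z + ε)).indicator (fun _ => 1 / (2 * ε)) x) -
          Real.sqrt (φ x)) ^ 2)
      atTop (𝓝 (2 - 2 * Real.sqrt (1 - α) * ∫ x, Real.sqrt (f x * φ x))) := by
  have h1α : 0 ≤ 1 - α := by linarith
  have hfα : Integrable fun x => (1 - α) * f x := hfi.const_mul _
  have hδα : ∀ z, Integrable fun x => α * uniformDensity z ε x := fun z =>
    (integrable_uniformDensity z ε).const_mul α
  have hfα0 : 0 ≤ fun x => (1 - α) * f x := fun x => mul_nonneg h1α (hf0 x)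
  have hδα0 : ∀ z, 0 ≤ fun x => α * uniformDensity z ε x := fun z x =>
    mul_nonneg hα0 (uniformDensity_nonneg z ε x)
  have hmix : ∀ z, Integrable fun x => (1 - α) * f x + α * uniformDensity z ε x := fun z =>
    hfα.add (hδα z)
  have hmix0 : ∀ z, 0 ≤ fun x => (1 - α) * f x + α * uniformDensity z ε x := fun z =>
    add_nonneg hfα0 (hδα0 z)
  have haff : ∫ x, √((1 - α) * f x * φ x) = √(1 - α) * ∫ x, √(f x * φ x) := by
    simp_rw [mul_assoc, Real.sqrt_mul h1α]
    exact integral_const_mul _ _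
  have hlim : Tendsto (fun z => ∫ x, √(((1 - α) * f x + α * uniformDensity z ε x) * φ x))
      atTop (𝓝 (√(1 - α) * ∫ x, √(f x * φ x))) :=
    haff ▸ tendsto_integral_sqrt_add_mul hfα hφi hδα hfα0 hφ0 hδα0
      (tendsto_integral_sqrt_uniformDensity_mul hφi hφ0 hα0 hε)
  have hmass : ∀ z, ∫ x, (1 - α) * f x + α * uniformDensity z ε x = 1 := fun z => by
    rw [integral_add hfα (hδα z), integral_const_mul, integral_const_mul, hf1,
      integral_uniformDensity z hε]
    ring
  have hhell : ∀ z, ∫ x, (√((1 - α) * f x + α * uniformDensity z ε x) - √(φ x)) ^ 2 =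
      2 - 2 * ∫ x, √(((1 - α) * f x + α * uniformDensity z ε x) * φ x) := fun z => by
    rw [integral_sqrt_sub_sqrt_sq (hmix z) hφi (hmix0 z) hφ0, hmass z, hφ1]
    norm_num
  have hlim₂ := (tendsto_const_nhds (x := (2 : ℝ))).sub (hlim.const_mul 2)
  rw [← mul_assoc] at hlim₂
  exact ⟨hlim, hlim₂.congr fun z => (hhell z).symm⟩

/-- Robustness mechanism of Section 4 of the paper: for the gross-error mixture
`(1−α) f + α δ_z` with `δ_z` the uniform density on `(z−ε, z+ε)`, the Hellinger
affinity with a density `φ` converges to `√(1−α) ∫ √(f φ)` as `z → ∞`;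
equivalently `h((1−α) f + α δ_z, φ)² → 2 − 2 √(1−α) ∫ √(f φ)`. -/
theorem stmt_14 (f φ : ℝ → ℝ) (hfm : Measurable f) (hφm : Measurable φ)
    (hf0 : ∀ x, 0 ≤ f x) (hφ0 : ∀ x, 0 ≤ φ x)
    (hfi : Integrable f) (hφi : Integrable φ)
    (hf1 : ∫ x, f x = 1) (hφ1 : ∫ x, φ x = 1)
    (α : ℝ) (hα0 : 0 ≤ α) (hα1 : α ≤ 1) (ε : ℝ) (hε : 0 < ε) :
    Tendsto
      (fun z : ℝ => ∫ x, Real.sqrt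
        (((1 - α) * f x +
          α * (Set.Ioo (z - ε) (z + ε)).indicator (fun _ => 1 / (2 * ε)) x) * φ x))
      atTop (𝓝 (Real.sqrt (1 - α) * ∫ x, Real.sqrt (f x * φ x))) ∧
    Tendsto
      (fun z : ℝ => ∫ x,
        (Real.sqrt ((1 - α) * f x +
            α * (Set.Ioo (z - ε) (z + ε)).indicator (fun _ => 1 / (2 * ε)) x) -
          Real.sqrt (φ x)) ^ 2)
      atTop (𝓝 (2 - 2 * Real.sqrt (1 - α) * ∫ x, Real.sqrt (f x * φ x))) :=
  stmt_14_general f φ hf0 hφ0 hfi hφi hf1 hφ1 α hα0 hα1 ε hε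
end
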